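/- arXiv:1402.5476 — 2 statements merged into one kernel-verified Lean document; each statement's English description precedes it below -/
import Mathlib

section
/- Let F : Ω → L(K,H) be holomorphic with h = F*F invertible and P = F h^{-1} F*. Define the curvature K_P := −∂̄(h^{-1}·∂h). Then (∂̄P)·(∂P) = F·(−K_P)·h^{-1}·F* on Ω. -/
open Complex ContinuousLinearMap

/-- Wirtinger derivative ∂ = ∂/∂λ. -/
noncomputable def pd {E : Type*} [NormedAddCommGroup E] [NormedSpace ℂ E]
    (f : ℂ → E) : ℂ → E :=
  fun z => (2⁻¹ : ℂ) • (fderiv ℝ f z 1 - Complex.I • fderiv ℝ f z Complex.I)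

/-- Wirtinger derivative ∂̄ = ∂/∂λ̄. -/
noncomputable def pdbar {E : Type*} [NormedAddCommGroup E] [NormedSpace ℂ E]
    (f : ℂ → E) : ℂ → E :=
  fun z => (2⁻¹ : ℂ) • (fderiv ℝ f z 1 + Complex.I • fderiv ℝ f z Complex.I)

/-!
Since `F` is holomorphic, `∂̄F = 0` and `∂F* = 0`, so `∂h = F* F'` and `∂̄h = F'* F`. With the
Leibniz rule and `∂(h⁻¹) = -h⁻¹ (∂h) h⁻¹` this gives `∂P = F' h⁻¹ F* - F h⁻¹ F* F' h⁻¹ F*`,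
`∂̄P = F h⁻¹ F'* - F h⁻¹ F'* F h⁻¹ F*` and `-K_P = h⁻¹ F'* F' - h⁻¹ F'* F h⁻¹ F* F'`.
Multiplying out `(∂̄P)(∂P)`, the cancellation `F* F h⁻¹ = 1` turns the last of the four terms into
the negative of one of the middle ones, and what is left is `F (-K_P) h⁻¹ F*`.
-/

open Filter Topology

theorem IsBoundedBilinearMap.restrictScalars (𝕜 : Type*) {𝕜' E F G : Type*}
    [NontriviallyNormedField 𝕜] [NontriviallyNormedField 𝕜'] [NormedAlgebra 𝕜 𝕜']
    [NormedAddCommGroup E] [NormedSpace 𝕜' E] [NormedSpace 𝕜 E] [IsScalarTower 𝕜 𝕜' E]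
    [NormedAddCommGroup F] [NormedSpace 𝕜' F] [NormedSpace 𝕜 F] [IsScalarTower 𝕜 𝕜' F]
    [NormedAddCommGroup G] [NormedSpace 𝕜' G] [NormedSpace 𝕜 G] [IsScalarTower 𝕜 𝕜' G]
    {f : E × F → G} (hf : IsBoundedBilinearMap 𝕜' f) : IsBoundedBilinearMap 𝕜 f where
  add_left := hf.add_left
  smul_left c x y := by simpa only [algebraMap_smul] using hf.smul_left (algebraMap 𝕜 𝕜' c) x y
  add_right := hf.add_right
  smul_right c x y := by simpa only [algebraMap_smul] using hf.smul_right (algebraMap 𝕜 𝕜' c) x y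
  bound := hf.bound

section RealDifferentiability

variable {V E F G : Type*} [NormedAddCommGroup V] [NormedSpace ℝ V] {x : V}
  [NormedAddCommGroup E] [NormedSpace ℂ E] [NormedAddCommGroup F]
  [NormedSpace ℂ F] [NormedAddCommGroup G] [NormedSpace ℂ G]

-- `HasFDerivAt.clm_comp` needs the operators to be linear over the field of differentiation.
theorem HasFDerivAt.clm_comp_real {f : V → F →L[ℂ] G} {g : V → E →L[ℂ] F}
    {f' : V →L[ℝ] F →L[ℂ] G} {g' : V →L[ℝ] E →L[ℂ] F}
    (hf : HasFDerivAt f f' x) (hg : HasFDerivAt g g' x) :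
    HasFDerivAt (fun w => f w ∘L g w)
      ((isBoundedBilinearMap_comp.restrictScalars ℝ).deriv (f x, g x) ∘L f'.prod g') x := by
  exact ((isBoundedBilinearMap_comp.restrictScalars ℝ).hasFDerivAt (f x, g x)).comp x
    (hf.prodMk hg)

theorem DifferentiableAt.clm_comp_real {f : V → F →L[ℂ] G} {g : V → E →L[ℂ] F}
    (hf : DifferentiableAt ℝ f x) (hg : DifferentiableAt ℝ g x) :
    DifferentiableAt ℝ (fun w => f w ∘L g w) x :=
  (hf.hasFDerivAt.clm_comp_real hg.hasFDerivAt).differentiableAt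

variable {H K : Type*} [NormedAddCommGroup H] [InnerProductSpace ℂ H] [CompleteSpace H]
  [NormedAddCommGroup K] [InnerProductSpace ℂ K] [CompleteSpace K]

noncomputable def adjointRealCLM : (K →L[ℂ] H) →L[ℝ] (H →L[ℂ] K) where
  toFun := adjoint
  map_add' := map_add adjoint
  map_smul' r T := by simpa using adjoint.map_smulₛₗ (r : ℂ) T
  cont := adjoint.continuous

@[simp]
theorem adjointRealCLM_apply (T : K →L[ℂ] H) : adjointRealCLM T = adjoint T := rfl

theorem HasFDerivAt.adjoint {f : V → K →L[ℂ] H} {f' : V →L[ℝ] K →L[ℂ] H} (hf : HasFDerivAt f f' x) :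
    HasFDerivAt (fun w => adjoint (f w)) (adjointRealCLM ∘L f') x := by
  exact adjointRealCLM.hasFDerivAt.comp x hf

theorem DifferentiableAt.adjoint {f : V → K →L[ℂ] H} (hf : DifferentiableAt ℝ f x) :
    DifferentiableAt ℝ (fun w => adjoint (f w)) x :=
  hf.hasFDerivAt.adjoint.differentiableAt

end RealDifferentiability

section Wirtinger

variable {E F G : Type*} [NormedAddCommGroup E] [NormedSpace ℂ E] [NormedAddCommGroup F]
  [NormedSpace ℂ F] [NormedAddCommGroup G] [NormedSpace ℂ G] {s z : ℂ}

-- A single calculus for `pd` (`s = -I`) and `pdbar` (`s = I`).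
noncomputable def wirtinger (s : ℂ) (f : ℂ → E) (z : ℂ) : E :=
  (2⁻¹ : ℂ) • (fderiv ℝ f z 1 + s • fderiv ℝ f z I)

theorem pd_eq_wirtinger (f : ℂ → E) : pd f = wirtinger (-I) f := by
  funext z; simp only [pd, wirtinger, neg_smul, sub_eq_add_neg]

theorem pdbar_eq_wirtinger (f : ℂ → E) : pdbar f = wirtinger I f := rfl

theorem HasFDerivAt.wirtinger_eq {f : ℂ → E} {f' : ℂ →L[ℝ] E} (hf : HasFDerivAt f f' z) :
    wirtinger s f z = (2⁻¹ : ℂ) • (f' 1 + s • f' I) := by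
  rw [wirtinger, hf.fderiv]

theorem DifferentiableAt.wirtinger_eq {f : ℂ → E} (hf : DifferentiableAt ℂ f z) :
    wirtinger s f z = (2⁻¹ * (1 + s * I)) • deriv f z := by
  rw [(hf.hasDerivAt.hasFDerivAt.restrictScalars ℝ).wirtinger_eq]
  simp only [coe_restrictScalars', toSpanSingleton_apply, one_smul]
  module

theorem wirtinger_clm_comp {f : ℂ → F →L[ℂ] G} {g : ℂ → E →L[ℂ] F}
    (hf : DifferentiableAt ℝ f z) (hg : DifferentiableAt ℝ g z) :
    wirtinger s (fun w => f w ∘L g w) z = wirtinger s f z ∘L g z + f z ∘L wirtinger s g z := by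
  rw [(hf.hasFDerivAt.clm_comp_real hg.hasFDerivAt).wirtinger_eq, wirtinger, wirtinger]
  simp only [comp_apply, ContinuousLinearMap.prod_apply, IsBoundedBilinearMap.deriv_apply,
    smul_add, add_comp, smul_comp, comp_add, comp_smulₛₗ, RingHom.id_apply]
  abel

theorem wirtinger_ringInverse {R : Type*} [NormedRing R] [NormedAlgebra ℂ R] [CompleteSpace R]
    {f : ℂ → R} (hf : DifferentiableAt ℝ f z) (hu : IsUnit (f z)) :
    wirtinger s (fun w => Ring.inverse (f w)) z =
      -(Ring.inverse (f z) * wirtinger s f z * Ring.inverse (f z)) := by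
  obtain ⟨u, hu⟩ := hu
  have hinv : HasFDerivAt Ring.inverse (-mulLeftRight ℝ R ↑u⁻¹ ↑u⁻¹) (f z) :=
    hu ▸ hasFDerivAt_ringInverse u
  rw [HasFDerivAt.wirtinger_eq (f := fun w => Ring.inverse (f w)) (hinv.comp z hf.hasFDerivAt),
    wirtinger, ← hu, Ring.inverse_unit]
  simp only [neg_comp, neg_apply, comp_apply, mulLeftRight_apply, smul_neg, smul_add, mul_add,
    add_mul, mul_smul_comm, smul_mul_assoc, neg_add]

theorem wirtinger_adjoint {H K : Type*} [NormedAddCommGroup H] [InnerProductSpace ℂ H]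
    [CompleteSpace H] [NormedAddCommGroup K] [InnerProductSpace ℂ K] [CompleteSpace K]
    {f : ℂ → K →L[ℂ] H} (hf : DifferentiableAt ℂ f z) :
    wirtinger s (fun w => adjoint (f w)) z = (2⁻¹ * (1 - s * I)) • adjoint (deriv f z) := by
  rw [(hf.hasDerivAt.hasFDerivAt.restrictScalars ℝ).adjoint.wirtinger_eq]
  simp only [comp_apply, coe_restrictScalars', toSpanSingleton_apply, one_smul,
    adjointRealCLM_apply, map_smulₛₗ, conj_I]
  module

end Wirtinger

section PdPdbar

variable {E F G : Type*} [NormedAddCommGroup E] [NormedSpace ℂ E] [NormedAddCommGroup F]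
  [NormedSpace ℂ F] [NormedAddCommGroup G] [NormedSpace ℂ G] {z : ℂ}

theorem Filter.EventuallyEq.pd_eq {f g : ℂ → E} (h : f =ᶠ[𝓝 z] g) : pd f z = pd g z := by
  simp only [pd, h.fderiv_eq]

theorem Filter.EventuallyEq.pdbar_eq {f g : ℂ → E} (h : f =ᶠ[𝓝 z] g) :
    pdbar f z = pdbar g z := by
  simp only [pdbar, h.fderiv_eq]

theorem DifferentiableAt.pd_eq {f : ℂ → E} (hf : DifferentiableAt ℂ f z) :
    pd f z = deriv f z := by
  rw [pd_eq_wirtinger, hf.wirtinger_eq]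
  norm_num

theorem DifferentiableAt.pdbar_eq {f : ℂ → E} (hf : DifferentiableAt ℂ f z) : pdbar f z = 0 := by
  rw [pdbar_eq_wirtinger, hf.wirtinger_eq]
  norm_num

theorem pd_clm_comp {f : ℂ → F →L[ℂ] G} {g : ℂ → E →L[ℂ] F}
    (hf : DifferentiableAt ℝ f z) (hg : DifferentiableAt ℝ g z) :
    pd (fun w => f w ∘L g w) z = pd f z ∘L g z + f z ∘L pd g z := by
  simp only [pd_eq_wirtinger, wirtinger_clm_comp hf hg]

theorem pdbar_clm_comp {f : ℂ → F →L[ℂ] G} {g : ℂ → E →L[ℂ] F}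
    (hf : DifferentiableAt ℝ f z) (hg : DifferentiableAt ℝ g z) :
    pdbar (fun w => f w ∘L g w) z = pdbar f z ∘L g z + f z ∘L pdbar g z := by
  simp only [pdbar_eq_wirtinger, wirtinger_clm_comp hf hg]

theorem pd_ringInverse {R : Type*} [NormedRing R] [NormedAlgebra ℂ R] [CompleteSpace R]
    {f : ℂ → R} (hf : DifferentiableAt ℝ f z) (hu : IsUnit (f z)) :
    pd (fun w => Ring.inverse (f w)) z = -(Ring.inverse (f z) * pd f z * Ring.inverse (f z)) := by
  simp only [pd_eq_wirtinger, wirtinger_ringInverse hf hu]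

theorem pdbar_ringInverse {R : Type*} [NormedRing R] [NormedAlgebra ℂ R] [CompleteSpace R]
    {f : ℂ → R} (hf : DifferentiableAt ℝ f z) (hu : IsUnit (f z)) :
    pdbar (fun w => Ring.inverse (f w)) z =
      -(Ring.inverse (f z) * pdbar f z * Ring.inverse (f z)) := by
  simp only [pdbar_eq_wirtinger, wirtinger_ringInverse hf hu]

variable {H K : Type*} [NormedAddCommGroup H] [InnerProductSpace ℂ H] [CompleteSpace H]
  [NormedAddCommGroup K] [InnerProductSpace ℂ K] [CompleteSpace K] {f : ℂ → K →L[ℂ] H}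

theorem pd_adjoint (hf : DifferentiableAt ℂ f z) : pd (fun w => adjoint (f w)) z = 0 := by
  rw [pd_eq_wirtinger, wirtinger_adjoint hf]
  simp

theorem pdbar_adjoint (hf : DifferentiableAt ℂ f z) :
    pdbar (fun w => adjoint (f w)) z = adjoint (deriv f z) := by
  rw [pdbar_eq_wirtinger, wirtinger_adjoint hf]
  norm_num

end PdPdbar

section Gram

variable {H K : Type*} [NormedAddCommGroup H] [InnerProductSpace ℂ H] [CompleteSpace H]
  [NormedAddCommGroup K] [InnerProductSpace ℂ K] [CompleteSpace K]
  {F : ℂ → K →L[ℂ] H} {z : ℂ}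

noncomputable def gram (F : ℂ → K →L[ℂ] H) : ℂ → K →L[ℂ] K := fun w => adjoint (F w) ∘L F w

noncomputable def rangeProj (F : ℂ → K →L[ℂ] H) (w : ℂ) : H →L[ℂ] H :=
  F w ∘L Ring.inverse (gram F w) ∘L adjoint (F w)

theorem DifferentiableAt.gram (hF : DifferentiableAt ℝ F z) : DifferentiableAt ℝ (gram F) z :=
  hF.adjoint.clm_comp_real hF

theorem pd_gram (hF : DifferentiableAt ℂ F z) : pd (gram F) z = adjoint (F z) ∘L deriv F z := by
  have hFr := hF.restrictScalars ℝ
  unfold gram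
  rw [pd_clm_comp hFr.adjoint hFr, pd_adjoint hF, hF.pd_eq, zero_comp, zero_add]

theorem pdbar_gram (hF : DifferentiableAt ℂ F z) :
    pdbar (gram F) z = adjoint (deriv F z) ∘L F z := by
  have hFr := hF.restrictScalars ℝ
  unfold gram
  rw [pdbar_clm_comp hFr.adjoint hFr, pdbar_adjoint hF, hF.pdbar_eq, comp_zero, add_zero]

theorem pd_rangeProj (hF : DifferentiableAt ℂ F z) (hu : IsUnit (gram F z)) :
    pd (rangeProj F) z =
      deriv F z ∘L Ring.inverse (gram F z) ∘L adjoint (F z) -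
        F z ∘L Ring.inverse (gram F z) ∘L adjoint (F z) ∘L deriv F z ∘L
          Ring.inverse (gram F z) ∘L adjoint (F z) := by
  have hFr := hF.restrictScalars ℝ
  have hGinv := hFr.gram.inverse hu
  unfold rangeProj
  rw [pd_clm_comp hFr (hGinv.clm_comp_real hFr.adjoint), pd_clm_comp hGinv hFr.adjoint,
    pd_ringInverse hFr.gram hu, pd_gram hF, pd_adjoint hF, hF.pd_eq, comp_zero, add_zero]
  simp only [mul_def, comp_assoc, neg_comp, comp_neg, sub_eq_add_neg]

theorem pdbar_rangeProj (hF : DifferentiableAt ℂ F z) (hu : IsUnit (gram F z)) :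
    pdbar (rangeProj F) z =
      F z ∘L Ring.inverse (gram F z) ∘L adjoint (deriv F z) -
        F z ∘L Ring.inverse (gram F z) ∘L adjoint (deriv F z) ∘L F z ∘L
          Ring.inverse (gram F z) ∘L adjoint (F z) := by
  have hFr := hF.restrictScalars ℝ
  have hGinv := hFr.gram.inverse hu
  unfold rangeProj
  rw [pdbar_clm_comp hFr (hGinv.clm_comp_real hFr.adjoint), pdbar_clm_comp hGinv hFr.adjoint,
    pdbar_ringInverse hFr.gram hu, pdbar_gram hF, pdbar_adjoint hF, hF.pdbar_eq, zero_comp,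
    zero_add]
  simp only [mul_def, comp_assoc, neg_comp, comp_neg, comp_add, sub_eq_add_neg]
  abel

theorem pdbar_inverse_gram_mul_pd_gram (hF : AnalyticAt ℂ F z) (hu : IsUnit (gram F z)) :
    pdbar (fun w => Ring.inverse (gram F w) * pd (gram F) w) z =
      Ring.inverse (gram F z) ∘L adjoint (deriv F z) ∘L deriv F z -
        Ring.inverse (gram F z) ∘L adjoint (deriv F z) ∘L F z ∘L Ring.inverse (gram F z) ∘L
          adjoint (F z) ∘L deriv F z := by
  have hFr := hF.differentiableAt.restrictScalars ℝ
  have hF' := hF.deriv.differentiableAt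
  have hpd : (fun w => Ring.inverse (gram F w) * pd (gram F) w) =ᶠ[𝓝 z]
      fun w => Ring.inverse (gram F w) ∘L adjoint (F w) ∘L deriv F w := by
    filter_upwards [hF.eventually_analyticAt] with w hw
    rw [pd_gram hw.differentiableAt, mul_def]
  rw [hpd.pdbar_eq,
    pdbar_clm_comp (hFr.gram.inverse hu) (hFr.adjoint.clm_comp_real (hF'.restrictScalars ℝ)),
    pdbar_clm_comp hFr.adjoint (hF'.restrictScalars ℝ), pdbar_ringInverse hFr.gram hu,
    pdbar_gram hF.differentiableAt, pdbar_adjoint hF.differentiableAt, hF'.pdbar_eq, comp_zero,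
    add_zero]
  simp only [mul_def, comp_assoc, neg_comp, sub_eq_add_neg]
  abel

theorem pdbar_rangeProj_mul_pd_rangeProj (hF : AnalyticAt ℂ F z) (hu : IsUnit (gram F z)) :
    pdbar (rangeProj F) z * pd (rangeProj F) z =
      F z ∘L (pdbar (fun w => Ring.inverse (gram F w) * pd (gram F) w) z *
        Ring.inverse (gram F z)) ∘L adjoint (F z) := by
  have hcancel (X : H →L[ℂ] K) : adjoint (F z) ∘L F z ∘L Ring.inverse (gram F z) ∘L X = X := by
    change (gram F z * Ring.inverse (gram F z)) ∘L X = X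
    rw [Ring.mul_inverse_cancel _ hu, one_def, id_comp]
  rw [pdbar_rangeProj hF.differentiableAt hu, pd_rangeProj hF.differentiableAt hu,
    pdbar_inverse_gram_mul_pd_gram hF hu]
  simp only [mul_def, comp_sub, sub_comp, comp_assoc, hcancel]
  abel

end Gram

theorem stmt6
    {H K : Type*} [NormedAddCommGroup H] [InnerProductSpace ℂ H] [CompleteSpace H]
    [NormedAddCommGroup K] [InnerProductSpace ℂ K] [CompleteSpace K]
    (Ω : Set ℂ) (hΩ : IsOpen Ω)
    (F : ℂ → K →L[ℂ] H)
    (hF : DifferentiableOn ℂ F Ω)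
    (h : ℂ → K →L[ℂ] K)
    (hdef : ∀ z ∈ Ω, h z = ContinuousLinearMap.adjoint (F z) ∘L F z)
    (hinv : ∀ z ∈ Ω, IsUnit (h z))
    (hi : ℂ → K →L[ℂ] K) (hhi : ∀ z ∈ Ω, hi z = Ring.inverse (h z))
    (P : ℂ → H →L[ℂ] H)
    (hP : ∀ z ∈ Ω, P z = F z ∘L hi z ∘L ContinuousLinearMap.adjoint (F z))
    (KP : ℂ → K →L[ℂ] K)
    (hKP : ∀ z ∈ Ω, KP z = -(pdbar (fun w => hi w * pd h w) z))
    : ∀ z ∈ Ω,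
      pdbar P z * pd P z =
        F z ∘L ((-(KP z)) * hi z) ∘L ContinuousLinearMap.adjoint (F z) := by
  have hgram : ∀ w ∈ Ω, h =ᶠ[𝓝 w] gram F := fun w hw => eventuallyEq_of_mem (hΩ.mem_nhds hw) hdef
  have hinvgram : ∀ w ∈ Ω, hi w = Ring.inverse (gram F w) := fun w hw => by
    rw [hhi w hw, hdef w hw]; rfl
  intro z hz
  have hproj : P =ᶠ[𝓝 z] rangeProj F := eventuallyEq_of_mem (hΩ.mem_nhds hz) fun w hw => by
    rw [hP w hw, hinvgram w hw]; rfl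
  have hcurv : (fun w => hi w * pd h w) =ᶠ[𝓝 z]
      fun w => Ring.inverse (gram F w) * pd (gram F) w :=
    eventuallyEq_of_mem (hΩ.mem_nhds hz) fun w hw => by rw [hinvgram w hw, (hgram w hw).pd_eq]
  have hu : IsUnit (gram F z) := (hgram z hz).eq_of_nhds ▸ hinv z hz
  rw [hKP z hz, neg_neg, hproj.pdbar_eq, hproj.pd_eq, hcurv.pdbar_eq, hinvgram z hz]
  exact pdbar_rangeProj_mul_pd_rangeProj (hF.analyticOnNhd hΩ z hz) hu
end

section
/- Let P : Ω → L(H) be an extended holomorphic curve. Then for any positive integers i₁, j₁ and any l ≥ 1, the operator-valued function G := ((∂̄^{i_1}P)(∂^{j_1}P))^{l} satisfies G = P·G = G·P, (∂̄P)·G = 0, and G·(∂P) = 0 at every point of Ω. -/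
open Complex ContinuousLinearMap

section Aux

variable {H : Type*} [NormedAddCommGroup H] [InnerProductSpace ℂ H] [CompleteSpace H]

lemma pdbar_congr {f g : ℂ → (H →L[ℂ] H)} {z : ℂ} (h : f =ᶠ[nhds z] g) :
    pdbar f z = pdbar g z := by
  unfold pdbar; rw [h.fderiv_eq]

lemma pd_congr {f g : ℂ → (H →L[ℂ] H)} {z : ℂ} (h : f =ᶠ[nhds z] g) :
    pd f z = pd g z := by
  unfold pd; rw [h.fderiv_eq]

lemma pdbar_mul {f g : ℂ → (H →L[ℂ] H)} {z : ℂ}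
    (hf : DifferentiableAt ℝ f z) (hg : DifferentiableAt ℝ g z) :
    pdbar (fun w => f w * g w) z = pdbar f z * g z + f z * pdbar g z := by
  unfold pdbar
  rw [fderiv_fun_mul' hf hg]
  simp only [ContinuousLinearMap.add_apply, ContinuousLinearMap.smul_apply,
    ContinuousLinearMap.smulRight_apply, smul_eq_mul]
  simp only [smul_add, smul_sub, add_mul, sub_mul, mul_add, mul_sub,
    smul_mul_assoc, mul_smul_comm, op_smul_eq_mul]
  module

lemma pd_mul {f g : ℂ → (H →L[ℂ] H)} {z : ℂ}
    (hf : DifferentiableAt ℝ f z) (hg : DifferentiableAt ℝ g z) :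
    pd (fun w => f w * g w) z = pd f z * g z + f z * pd g z := by
  unfold pd
  rw [fderiv_fun_mul' hf hg]
  simp only [ContinuousLinearMap.add_apply, ContinuousLinearMap.smul_apply,
    ContinuousLinearMap.smulRight_apply, smul_eq_mul]
  simp only [smul_add, smul_sub, add_mul, sub_mul, mul_add, mul_sub,
    smul_mul_assoc, mul_smul_comm, op_smul_eq_mul]
  module

lemma pd_star {f : ℂ → (H →L[ℂ] H)} {z : ℂ} (hf : DifferentiableAt ℝ f z) :
    pd (fun w => star (f w)) z = star (pdbar f z) := by
  have hL : fderiv ℝ (fun w => star (f w)) z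
      = (starL' ℝ : (H →L[ℂ] H) ≃L[ℝ] (H →L[ℂ] H)).toContinuousLinearMap.comp (fderiv ℝ f z) :=
    ((starL' ℝ : (H →L[ℂ] H) ≃L[ℝ] (H →L[ℂ] H)).toContinuousLinearMap.hasFDerivAt.comp z
      hf.hasFDerivAt).fderiv
  unfold pd pdbar
  rw [hL]
  simp only [ContinuousLinearMap.coe_comp', Function.comp_apply,
    ContinuousLinearEquiv.coe_coe, starL'_apply]
  rw [star_smul, star_add, star_smul]
  simp [Complex.star_def, Complex.conj_I, sub_eq_add_neg, neg_smul]

lemma pdbar_smooth {Ω : Set ℂ} (hΩ : IsOpen Ω) {f : ℂ → (H →L[ℂ] H)}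
    (hf : ContDiffOn ℝ (⊤ : ℕ∞) f Ω) : ContDiffOn ℝ (⊤ : ℕ∞) (pdbar f) Ω := by
  have h1 : ContDiffOn ℝ (⊤ : ℕ∞) (fun z => fderiv ℝ f z) Ω := hf.fderiv_of_isOpen hΩ (by simp)
  have e1 : ContDiffOn ℝ (⊤ : ℕ∞) (fun z => fderiv ℝ f z 1) Ω :=
    (ContinuousLinearMap.apply ℝ (H →L[ℂ] H) (1:ℂ)).contDiff.comp_contDiffOn h1
  have e2 : ContDiffOn ℝ (⊤ : ℕ∞) (fun z => fderiv ℝ f z Complex.I) Ω :=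
    (ContinuousLinearMap.apply ℝ (H →L[ℂ] H) (Complex.I:ℂ)).contDiff.comp_contDiffOn h1
  exact ContDiffOn.const_smul _ (e1.add (ContDiffOn.const_smul _ e2))

lemma pd_smooth {Ω : Set ℂ} (hΩ : IsOpen Ω) {f : ℂ → (H →L[ℂ] H)}
    (hf : ContDiffOn ℝ (⊤ : ℕ∞) f Ω) : ContDiffOn ℝ (⊤ : ℕ∞) (pd f) Ω := by
  have h1 : ContDiffOn ℝ (⊤ : ℕ∞) (fun z => fderiv ℝ f z) Ω := hf.fderiv_of_isOpen hΩ (by simp)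
  have e1 : ContDiffOn ℝ (⊤ : ℕ∞) (fun z => fderiv ℝ f z 1) Ω :=
    (ContinuousLinearMap.apply ℝ (H →L[ℂ] H) (1:ℂ)).contDiff.comp_contDiffOn h1
  have e2 : ContDiffOn ℝ (⊤ : ℕ∞) (fun z => fderiv ℝ f z Complex.I) Ω :=
    (ContinuousLinearMap.apply ℝ (H →L[ℂ] H) (Complex.I:ℂ)).contDiff.comp_contDiffOn h1
  exact ContDiffOn.const_smul _ (e1.sub (ContDiffOn.const_smul _ e2))

end Aux

theorem stmt13
    {H : Type*} [NormedAddCommGroup H] [InnerProductSpace ℂ H] [CompleteSpace H]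
    (Ω : Set ℂ) (hΩ : IsOpen Ω) (hconn : IsConnected Ω)
    (P : ℂ → H →L[ℂ] H)
    (hsmooth : ContDiffOn ℝ (⊤ : ℕ∞) P Ω)
    (hproj : ∀ z ∈ Ω, P z * P z = P z ∧ ContinuousLinearMap.adjoint (P z) = P z)
    (hhol : ∀ z ∈ Ω, pdbar P z = P z * pdbar P z) :
    ∀ (i₁ j₁ l : ℕ), 1 ≤ i₁ → 1 ≤ j₁ → 1 ≤ l → ∀ z ∈ Ω,
      (((pdbar^[i₁] P) z * (pd^[j₁] P) z) ^ l = P z * ((pdbar^[i₁] P) z * (pd^[j₁] P) z) ^ l ∧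
        ((pdbar^[i₁] P) z * (pd^[j₁] P) z) ^ l = ((pdbar^[i₁] P) z * (pd^[j₁] P) z) ^ l * P z) ∧
      (pdbar P z * ((pdbar^[i₁] P) z * (pd^[j₁] P) z) ^ l = 0 ∧
        ((pdbar^[i₁] P) z * (pd^[j₁] P) z) ^ l * pd P z = 0) := by
  -- smoothness of all iterated Wirtinger derivatives
  have hsm_bar : ∀ i, ContDiffOn ℝ (⊤ : ℕ∞) (pdbar^[i] P) Ω := by
    intro i; induction i with
    | zero => simpa using hsmooth
    | succ n ih => rw [Function.iterate_succ_apply']; exact pdbar_smooth hΩ ih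
  have hsm_d : ∀ j, ContDiffOn ℝ (⊤ : ℕ∞) (pd^[j] P) Ω := by
    intro j; induction j with
    | zero => simpa using hsmooth
    | succ n ih => rw [Function.iterate_succ_apply']; exact pd_smooth hΩ ih
  have hdiff : ∀ (f : ℂ → H →L[ℂ] H), ContDiffOn ℝ (⊤ : ℕ∞) f Ω → ∀ w ∈ Ω, DifferentiableAt ℝ f w :=
    fun f hf w hw => (hf.differentiableOn (by simp)).differentiableAt (hΩ.mem_nhds hw)
  have hev : ∀ w ∈ Ω, (fun u => P u * P u) =ᶠ[nhds w] P :=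
    fun w hw => Filter.eventuallyEq_of_mem (hΩ.mem_nhds hw) (fun u hu => (hproj u hu).1)
  -- (∂̄P)·P = 0
  have hA : ∀ w ∈ Ω, pdbar P w * P w = 0 := by
    intro w hw
    have h1 : pdbar (fun u => P u * P u) w = pdbar P w := pdbar_congr (hev w hw)
    rw [pdbar_mul (hdiff P hsmooth w hw) (hdiff P hsmooth w hw)] at h1
    rw [← hhol w hw] at h1
    exact add_eq_right.mp h1
  -- ∂P = (∂P)·P  via   ∂P = (∂̄P)*
  have hsP : ∀ w ∈ Ω, star (P w) = P w :=
    fun w hw => (ContinuousLinearMap.star_eq_adjoint (P w)).trans (hproj w hw).2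
  have hstar : ∀ w ∈ Ω, P =ᶠ[nhds w] (fun u => star (P u)) :=
    fun w hw => Filter.eventuallyEq_of_mem (hΩ.mem_nhds hw) (fun u hu => (hsP u hu).symm)
  have hCstar : ∀ w ∈ Ω, pd P w = star (pdbar P w) :=
    fun w hw => (pd_congr (hstar w hw)).trans (pd_star (hdiff P hsmooth w hw))
  have hC : ∀ w ∈ Ω, pd P w = pd P w * P w := by
    intro w hw
    calc pd P w = star (pdbar P w) := hCstar w hw
      _ = star (P w * pdbar P w) := by rw [← hhol w hw]
      _ = star (pdbar P w) * star (P w) := star_mul _ _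
      _ = pd P w * P w := by rw [← hCstar w hw, hsP w hw]
  -- P·(∂P) = 0
  have hB : ∀ w ∈ Ω, P w * pd P w = 0 := by
    intro w hw
    have h1 : pd (fun u => P u * P u) w = pd P w := pd_congr (hev w hw)
    rw [pd_mul (hdiff P hsmooth w hw) (hdiff P hsmooth w hw)] at h1
    rw [← hC w hw] at h1
    exact add_eq_left.mp h1
  -- ∂̄^i P = P · ∂̄^i P on Ω for i ≥ 1
  have key1 : ∀ i, 1 ≤ i → ∀ w ∈ Ω, pdbar^[i] P w = P w * pdbar^[i] P w := by
    intro i hi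
    induction i with
    | zero => omega
    | succ n ih =>
      by_cases hn : n = 0
      · subst hn; simpa using hhol
      · have hn1 : 1 ≤ n := Nat.one_le_iff_ne_zero.mpr hn
        have ihw := ih hn1
        intro w hw
        have hQdiff : DifferentiableAt ℝ (pdbar^[n] P) w := hdiff _ (hsm_bar n) w hw
        have hPdiff := hdiff P hsmooth w hw
        have hevQ : (pdbar^[n] P) =ᶠ[nhds w] (fun u => P u * pdbar^[n] P u) :=
          Filter.eventuallyEq_of_mem (hΩ.mem_nhds hw) (fun u hu => ihw u hu)
        rw [Function.iterate_succ_apply']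
        calc pdbar (pdbar^[n] P) w = pdbar (fun u => P u * pdbar^[n] P u) w := pdbar_congr hevQ
          _ = pdbar P w * pdbar^[n] P w + P w * pdbar (pdbar^[n] P) w := pdbar_mul hPdiff hQdiff
          _ = P w * pdbar (pdbar^[n] P) w := by
              rw [ihw w hw, ← mul_assoc, hA w hw, zero_mul, zero_add]
  -- ∂^j P = (∂^j P)·P on Ω for j ≥ 1
  have key2 : ∀ j, 1 ≤ j → ∀ w ∈ Ω, pd^[j] P w = pd^[j] P w * P w := by
    intro j hj
    induction j with
    | zero => omega
    | succ n ih =>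
      by_cases hn : n = 0
      · subst hn; simpa using hC
      · have hn1 : 1 ≤ n := Nat.one_le_iff_ne_zero.mpr hn
        have ihw := ih hn1
        intro w hw
        have hQdiff : DifferentiableAt ℝ (pd^[n] P) w := hdiff _ (hsm_d n) w hw
        have hPdiff := hdiff P hsmooth w hw
        have hevQ : (pd^[n] P) =ᶠ[nhds w] (fun u => pd^[n] P u * P u) :=
          Filter.eventuallyEq_of_mem (hΩ.mem_nhds hw) (fun u hu => ihw u hu)
        rw [Function.iterate_succ_apply']
        calc pd (pd^[n] P) w = pd (fun u => pd^[n] P u * P u) w := pd_congr hevQ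
          _ = pd (pd^[n] P) w * P w + pd^[n] P w * pd P w := pd_mul hQdiff hPdiff
          _ = pd (pd^[n] P) w * P w := by
              rw [ihw w hw, mul_assoc, hB w hw, mul_zero, add_zero]
  -- assemble
  intro i₁ j₁ l hi hj hl z hz
  set A := (pdbar^[i₁] P) z with hAdef
  set B := (pd^[j₁] P) z with hBdef
  have hPA : P z * A = A := (key1 i₁ hi z hz).symm
  have hBP : B * P z = B := (key2 j₁ hj z hz).symm
  obtain ⟨m, rfl⟩ : ∃ m, l = m + 1 := ⟨l - 1, by omega⟩
  have hPAB : P z * (A * B) = A * B := by rw [← mul_assoc, hPA]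
  have hABP : (A * B) * P z = A * B := by rw [mul_assoc, hBP]
  have hPG : P z * (A * B) ^ (m + 1) = (A * B) ^ (m + 1) := by
    rw [pow_succ', ← mul_assoc, hPAB]
  have hGP : (A * B) ^ (m + 1) * P z = (A * B) ^ (m + 1) := by
    rw [pow_succ, mul_assoc, hABP]
  refine ⟨⟨hPG.symm, hGP.symm⟩, ?_, ?_⟩
  · rw [← hPG, ← mul_assoc, hA z hz, zero_mul]
  · rw [← hGP, mul_assoc, hB z hz, mul_zero]
end
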